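/- For the autonomous Lagrangian L_a(x,y,ẋ,ẏ) = (1/2)ẋ² + 1 − cos(2πx) + (1/2)(ẏ−c)² on 𝕋² = ℝ²/ℤ², the projected Aubry set equals {0} × 𝕊¹; that is, for q ∈ 𝕋² one has h(q,q) = 0 if and only if q = π(0,ỹ) for some ỹ ∈ ℝ. -/

import Mathlib

open Set Filter MeasureTheory

noncomputable section

/-- The two-torus `𝕋² = ℝ²/ℤ²`. -/
abbrev T2 : Type := AddCircle (1 : ℝ) × AddCircle (1 : ℝ)

/-- The quotient map `π : ℝ² → 𝕋²`. -/
def p2 (q : ℝ × ℝ) : T2 := ((q.1 : AddCircle (1 : ℝ)), (q.2 : AddCircle (1 : ℝ)))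

/-- `γ` is continuous and piecewise `C¹` on `[a,b]`. -/
def PiecewiseC1On {E : Type*} [NormedAddCommGroup E] [NormedSpace ℝ E]
    (γ : ℝ → E) (a b : ℝ) : Prop :=
  ContinuousOn γ (Set.Icc a b) ∧
  ∃ (N : ℕ) (p : Fin (N + 1) → ℝ), p 0 = a ∧ p (Fin.last N) = b ∧ Monotone p ∧
    ∀ i : Fin N, ContDiffOn ℝ 1 γ (Set.Icc (p i.castSucc) (p i.succ))

/-- The Lagrangian `L_a(x,y,ẋ,ẏ) = ẋ²/2 + 1 − cos(2πx) + (ẏ−c)²/2`. -/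
def La (c : ℝ) (q v : ℝ × ℝ) : ℝ :=
  (1 / 2) * v.1 ^ 2 + 1 - Real.cos (2 * Real.pi * q.1) + (1 / 2) * (v.2 - c) ^ 2

/-- The action of a curve for `L_a` on `[a,b]`. -/
def actionA (c : ℝ) (γ : ℝ → ℝ × ℝ) (a b : ℝ) : ℝ :=
  ∫ s in a..b, La c (γ s) (deriv γ s)

/-- The Lax–Oleinik semigroup `T_t u (q)` for `L_a`. -/
def Tlo (c t : ℝ) (u : T2 → ℝ) (q : T2) : ℝ :=
  sInf {A : ℝ | ∃ γ : ℝ → ℝ × ℝ, PiecewiseC1On γ 0 t ∧ p2 (γ t) = q ∧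
    A = u (p2 (γ 0)) + actionA c γ 0 t}

/-- `F_t(q,q')`: minimal action among curves from `q` to `q'` in time `t`. -/
def Fa (c t : ℝ) (q q' : T2) : ℝ :=
  sInf {A : ℝ | ∃ γ : ℝ → ℝ × ℝ, PiecewiseC1On γ 0 t ∧ p2 (γ 0) = q ∧
    p2 (γ t) = q' ∧ A = actionA c γ 0 t}

/-- The Peierls barrier `h(q,q') = liminf_{t→+∞} F_t(q,q')`, written as
`sup over T of inf over t ≥ T`. -/
def hA (c : ℝ) (q q' : T2) : ℝ :=
  sSup {r : ℝ | ∃ T : ℝ, r = sInf {A : ℝ | ∃ t : ℝ, 0 < t ∧ T ≤ t ∧ A = Fa c t q q'}}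

/-- The circle `{0} × 𝕊¹ ⊆ 𝕋²`. -/
def circ0 : Set T2 := {q : T2 | ∃ yt : ℝ, q = p2 (0, yt)}

/-- The function `u_δ(π(x̃,ỹ)) = max(δ − dist(ỹ − 1/2, ℤ), 0)`. -/
def udelta (δ : ℝ) (q : T2) : ℝ :=
  max (δ - ‖q.2 - ((1 / 2 : ℝ) : AddCircle (1 : ℝ))‖) 0

/-!
Since `L_a ≥ 0`, `h ≥ 0`. On the line `x = 0` the potential `V x = 1 - cos (2πx)` vanishes and
the loop winding `round (c t)` times around `y` has action at most `1 / (8 t)`, so `h = 0`.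
Off it, let `d > 0` be the distance from `x` to `ℤ`. A loop of duration `t ≥ 1` either keeps its
`x`-coordinate within `d / 2` of the start, where `V ≥ V (d / 2)`, or moves it by `d / 2`; then,
as `L_a ≥ √(2V) |ẋ|` is the speed of `W ∘ x` for `W' = √(2V)`, its action is at least
`(d / 2) √(2 V (d / 2))`. So `F_t(q, q)` stays above a positive constant, while loops that relax
to `x = 0` and back keep it bounded; hence `h(q, q) > 0`.
-/

open Real Topology

theorem Fin.exists_mem_Ioo_of_notMem_range {α : Type*} [LinearOrder α] {N : ℕ}
    {p : Fin (N + 1) → α} {s : α}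
    (hs : s ∈ Icc (p 0) (p (Fin.last N))) (hsp : s ∉ range p) :
    ∃ i : Fin N, s ∈ Ioo (p i.castSucc) (p i.succ) := by
  by_contra! h
  have below : ∀ k, p k < s := by
    intro k
    induction k using Fin.induction with
    | zero => exact hs.1.lt_of_ne fun he => hsp ⟨0, he⟩
    | succ i ih => exact (not_lt.1 fun hlt => h i ⟨ih, hlt⟩).lt_of_ne fun he => hsp ⟨_, he⟩
  exact (below (Fin.last N)).not_ge hs.2

namespace PiecewiseC1On

variable {E : Type*} [NormedAddCommGroup E] [NormedSpace ℝ E] {γ : ℝ → E} {a b : ℝ}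

theorem exists_isCompact_deriv (hγ : PiecewiseC1On γ a b) :
    ∃ S : Set ℝ, S.Finite ∧ ∃ K : Set E, IsCompact K ∧
      ∀ s ∈ Ioo a b \ S, DifferentiableAt ℝ γ s ∧ deriv γ s ∈ K := by
  obtain ⟨-, N, p, hp0, hpN, -, hC1⟩ := hγ
  let I i := Icc (p (Fin.castSucc i)) (p i.succ)
  have hK : IsCompact (⋃ (i) (_ : p i.castSucc < p i.succ), derivWithin γ (I i) '' I i) :=
    isCompact_iUnion fun i => isCompact_iUnion fun hi => isCompact_Icc.image_of_continuousOn
      ((hC1 i).continuousOn_derivWithin (uniqueDiffOn_Icc hi) le_rfl)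
  refine ⟨range p, finite_range p, _, hK, fun s ⟨hs, hsp⟩ => ?_⟩
  obtain ⟨i, hi⟩ := Fin.exists_mem_Ioo_of_notMem_range
    (by rw [hp0, hpN]; exact Ioo_subset_Icc_self hs) hsp
  have hlt : p i.castSucc < p i.succ := hi.1.trans hi.2
  have hsI : s ∈ I i := Ioo_subset_Icc_self hi
  have hd : DifferentiableAt ℝ γ s :=
    ((hC1 i).differentiableOn one_ne_zero s hsI).differentiableAt (Icc_mem_nhds hi.1 hi.2)
  exact ⟨hd, mem_iUnion₂.2 ⟨i, hlt, s, hsI, hd.derivWithin (uniqueDiffOn_Icc hlt s hsI)⟩⟩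

theorem _root_.ContDiff.piecewiseC1On (hγ : ContDiff ℝ 1 γ) (hab : a ≤ b) :
    PiecewiseC1On γ a b :=
  ⟨hγ.continuous.continuousOn, 1, ![a, b], rfl, rfl, Fin.monotone_iff_le_succ.2 fun i => by
    fin_cases i; exact hab, fun _ => hγ.contDiffOn⟩

variable {F : Type*} [NormedAddCommGroup F]

theorem intervalIntegrable_comp [CompleteSpace E] (hγ : PiecewiseC1On γ a b) (hab : a ≤ b)
    {Φ : E → E → F} (hΦ : Continuous (Function.uncurry Φ)) :
    IntervalIntegrable (fun s => Φ (γ s) (deriv γ s)) volume a b := by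
  obtain ⟨S, hS, K, hK, hSK⟩ := hγ.exists_isCompact_deriv
  obtain ⟨M, hM⟩ := (isCompact_Icc.image_of_continuousOn hγ.1).prod hK
    |>.exists_bound_of_continuousOn hΦ.continuousOn
  rw [intervalIntegrable_iff_integrableOn_Ioo_of_le hab]
  refine ⟨hΦ.comp_aestronglyMeasurable (f := fun s => (γ s, deriv γ s)) ?_,
    .restrict_of_bounded (C := M) measure_Ioo_lt_top ?_⟩
  · exact ((hγ.1.mono Ioo_subset_Icc_self).aestronglyMeasurable measurableSet_Ioo).prodMk
      (aestronglyMeasurable_deriv γ _)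
  · filter_upwards [ae_restrict_mem measurableSet_Ioo,
      ae_restrict_of_ae (hS.countable.ae_notMem volume)] with s hs hsS
    exact hM (γ s, deriv γ s) ⟨mem_image_of_mem γ (Ioo_subset_Icc_self hs), (hSK s ⟨hs, hsS⟩).2⟩

theorem integral_fderiv_comp_eq_sub [CompleteSpace E] [NormedSpace ℝ F] [CompleteSpace F]
    (hγ : PiecewiseC1On γ a b) {u v : ℝ}
    (hau : a ≤ u) (huv : u ≤ v) (hvb : v ≤ b) {G : E → F} {G' : E → E →L[ℝ] F}
    (hG : ∀ z, HasFDerivAt G (G' z) z) (hG' : Continuous G') :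
    ∫ s in u..v, G' (γ s) (deriv γ s) = G (γ v) - G (γ u) := by
  obtain ⟨S, hS, _, _, hSK⟩ := hγ.exists_isCompact_deriv
  have hsub : Icc u v ⊆ Icc a b := Icc_subset_Icc hau hvb
  refine integral_eq_of_hasDerivAt_off_countable_of_le (fun s => G (γ s)) _ huv hS.countable
    ?_ (fun s hs => ?_) ?_
  · exact continuous_iff_continuousAt.2 (fun z => (hG z).continuousAt) |>.comp_continuousOn
      (hγ.1.mono hsub)
  · have hs' : s ∈ Ioo a b \ S := ⟨Ioo_subset_Ioo hau hvb hs.1, hs.2⟩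
    exact (hG (γ s)).comp_hasDerivAt s (hSK s hs').1.hasDerivAt
  · refine (hγ.intervalIntegrable_comp (hau.trans (huv.trans hvb)) (Φ := fun z w => G' z w)
      (by fun_prop)).mono_set ?_
    rwa [uIcc_of_le huv, uIcc_of_le (hau.trans (huv.trans hvb))]

end PiecewiseC1On

theorem mul_le_abs_sub_of_le_deriv {f f' : ℝ → ℝ} (hf : ∀ r, HasDerivAt f (f' r) r)
    (hf' : ∀ r, 0 ≤ f' r) {x y δ κ : ℝ} (hδ : 0 ≤ δ)
    (hκ : ∀ r ∈ Icc (x - δ) (x + δ), κ ≤ f' r) (hy : δ ≤ |y - x|) : κ * δ ≤ |f y - f x| := by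
  have hd : Differentiable ℝ f := fun r => (hf r).differentiableAt
  have hmono : Monotone f := monotone_of_deriv_nonneg hd fun r => (hf r).deriv ▸ hf' r
  have hgrow := (convex_Icc (x - δ) (x + δ)).mul_sub_le_image_sub_of_le_deriv
    hd.continuous.continuousOn hd.differentiableOn (C := κ) fun r hr =>
      (hf r).deriv ▸ hκ r (interior_subset hr)
  have hx : x ∈ Icc (x - δ) (x + δ) := ⟨by linarith, by linarith⟩
  rcases le_abs'.1 hy with hyx | hxy
  · have := hgrow (x - δ) ⟨le_rfl, by linarith⟩ x hx (by linarith)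
    have := hmono (show y ≤ x - δ by linarith)
    rw [abs_sub_comm]
    exact le_abs.2 (Or.inl (by linarith))
  · have := hgrow x hx (x + δ) ⟨by linarith, le_rfl⟩ (by linarith)
    have := hmono (show x + δ ≤ y by linarith)
    exact le_abs.2 (Or.inl (by linarith))

def liminfTop (f : ℝ → ℝ) : ℝ :=
  sSup {r : ℝ | ∃ T : ℝ, r = sInf {A : ℝ | ∃ t : ℝ, 0 < t ∧ T ≤ t ∧ A = f t}}

section liminfTop

variable {f : ℝ → ℝ} (hf0 : ∀ t, 0 < t → 0 ≤ f t)
include hf0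

theorem bddBelow_tail_of_nonneg (T : ℝ) : BddBelow {A : ℝ | ∃ t : ℝ, 0 < t ∧ T ≤ t ∧ A = f t} :=
  ⟨0, fun _ ⟨t, ht, _, hA⟩ => hA ▸ hf0 t ht⟩

theorem liminfTop_eq_zero (hf : Tendsto f atTop (𝓝 0)) : liminfTop f = 0 := by
  have inner (T : ℝ) : sInf {A : ℝ | ∃ t : ℝ, 0 < t ∧ T ≤ t ∧ A = f t} = 0 := by
    refine le_antisymm (le_of_forall_pos_le_add fun η hη => ?_)
      (Real.sInf_nonneg fun _ ⟨t, ht, _, hA⟩ => hA ▸ hf0 t ht)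
    obtain ⟨t, hft, ht⟩ := ((hf.eventually (gt_mem_nhds hη)).and
      (eventually_ge_atTop (max T 1))).exists
    have ht0 : 0 < t := lt_of_lt_of_le one_pos (le_of_max_le_right ht)
    exact (csInf_le (bddBelow_tail_of_nonneg hf0 T)
      ⟨t, ht0, le_of_max_le_left ht, rfl⟩).trans (by linarith)
  simp [liminfTop, inner]

theorem le_liminfTop {ε : ℝ} (hbdd : IsBoundedUnder (· ≤ ·) atTop f)
    (hε : ∀ᶠ t in atTop, ε ≤ f t) : ε ≤ liminfTop f := by
  obtain ⟨C, hC⟩ := hbdd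
  obtain ⟨T₀, hT₀⟩ := eventually_atTop.1 ((eventually_map.1 hC).and hε)
  unfold liminfTop
  refine le_trans ?_ (le_csSup ⟨C, ?_⟩ ⟨max T₀ 1, rfl⟩)
  · exact le_csInf ⟨_, _, by positivity, le_rfl, rfl⟩
      fun _ ⟨t, _, ht, hA⟩ => hA ▸ (hT₀ t (le_of_max_le_left ht)).2
  · rintro _ ⟨T, rfl⟩
    have hT : max T₀ 1 ≤ max T (max T₀ 1) := le_max_right _ _
    exact (csInf_le (bddBelow_tail_of_nonneg hf0 T) ⟨_, by positivity, le_max_left _ _, rfl⟩).trans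
      (hT₀ _ (le_of_max_le_left hT)).1

end liminfTop

def potential (x : ℝ) : ℝ := 1 - cos (2 * π * x)

def jacobiWeight (x : ℝ) : ℝ := √(2 * potential x)

/-- Signed distance from `0` in the Jacobi metric `√(2V) |dx|` of energy `0`. -/
def jacobiPrimitive (x : ℝ) : ℝ := ∫ r in (0 : ℝ)..x, jacobiWeight r

theorem La_eq (c : ℝ) (q v : ℝ × ℝ) :
    La c q v = v.1 ^ 2 / 2 + potential q.1 + (v.2 - c) ^ 2 / 2 := by
  unfold La potential; ring

theorem potential_nonneg (x : ℝ) : 0 ≤ potential x := sub_nonneg.2 (cos_le_one _)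

theorem potential_le_La (c : ℝ) (q v : ℝ × ℝ) : potential q.1 ≤ La c q v := by
  rw [La_eq]; nlinarith [sq_nonneg v.1, sq_nonneg (v.2 - c)]

theorem La_nonneg (c : ℝ) (q v : ℝ × ℝ) : 0 ≤ La c q v :=
  (potential_nonneg _).trans (potential_le_La c q v)

theorem jacobiWeight_mul_abs_le_La (c : ℝ) (q v : ℝ × ℝ) :
    jacobiWeight q.1 * |v.1| ≤ La c q v := by
  have h := Real.sq_sqrt (mul_nonneg two_pos.le (potential_nonneg q.1))
  rw [La_eq, jacobiWeight]
  nlinarith [sq_nonneg (|v.1| - √(2 * potential q.1)), sq_abs v.1, sq_nonneg (v.2 - c)]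

theorem potential_le_sq (u : ℝ) : potential u ≤ 2 * π ^ 2 * u ^ 2 := by
  have := one_sub_sq_div_two_le_cos (x := 2 * π * u)
  rw [potential]; nlinarith

theorem continuous_potential : Continuous potential := by unfold potential; fun_prop

theorem continuous_jacobiWeight : Continuous jacobiWeight :=
  (continuous_const.mul continuous_potential).sqrt

theorem hasDerivAt_jacobiPrimitive (x : ℝ) : HasDerivAt jacobiPrimitive (jacobiWeight x) x :=
  intervalIntegral.integral_hasDerivAt_right (continuous_jacobiWeight.intervalIntegrable _ _)
    (continuous_jacobiWeight.stronglyMeasurableAtFilter _ _) continuous_jacobiWeight.continuousAt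

theorem potential_norm_coe (x : ℝ) : potential ‖(x : AddCircle (1 : ℝ))‖ = potential x := by
  have h : 2 * π * |x - round x| = |2 * π * x - (round x : ℤ) * (2 * π)| := by
    rw [show 2 * π * x - (round x : ℤ) * (2 * π) = 2 * π * (x - round x) by ring, abs_mul,
      abs_of_pos two_pi_pos]
  rw [UnitAddCircle.norm_eq, potential, potential, h, cos_abs, cos_sub_int_mul_two_pi]

theorem potential_le_of_le_norm {δ x : ℝ} (hδ : 0 ≤ δ) (h : δ ≤ ‖(x : AddCircle (1 : ℝ))‖) :
    potential δ ≤ potential x := by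
  have half := AddCircle.norm_le_half_period (1 : ℝ) (x := (x : AddCircle (1 : ℝ))) one_ne_zero
  rw [← potential_norm_coe x, potential, potential]
  gcongr 1 - ?_
  apply cos_le_cos_of_nonneg_of_le_pi (by positivity) <;> [nlinarith [pi_pos]; gcongr]

theorem half_norm_le_norm_coe {x r : ℝ} (h : |r - x| ≤ ‖(x : AddCircle (1 : ℝ))‖ / 2) :
    ‖(x : AddCircle (1 : ℝ))‖ / 2 ≤ ‖(r : AddCircle (1 : ℝ))‖ := by
  have := norm_le_norm_add_norm_sub' (x : AddCircle (1 : ℝ)) (r : AddCircle (1 : ℝ))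
  have hxr : ‖(x : AddCircle (1 : ℝ)) - r‖ ≤ |r - x| := by
    rw [← AddCircle.coe_sub, abs_sub_comm]; exact QuotientAddGroup.norm_mk_le_norm
  linarith

theorem jacobiWeight_nonneg (x : ℝ) : 0 ≤ jacobiWeight x := sqrt_nonneg _

theorem jacobiWeight_le_of_le_norm {δ x : ℝ} (hδ : 0 ≤ δ) (h : δ ≤ ‖(x : AddCircle (1 : ℝ))‖) :
    jacobiWeight δ ≤ jacobiWeight x :=
  sqrt_le_sqrt (by linarith [potential_le_of_le_norm hδ h])

theorem potential_pos {δ : ℝ} (h0 : 0 < δ) (h1 : δ ≤ 1 / 2) : 0 < potential δ := by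
  have hlt : cos (2 * π * δ) < cos 0 :=
    cos_lt_cos_of_nonneg_of_le_pi le_rfl (by nlinarith [pi_pos]) (by positivity)
  rw [cos_zero] at hlt
  exact sub_pos.2 hlt

theorem continuous_uncurry_La (c : ℝ) : Continuous (Function.uncurry (La c)) := by
  unfold La; fun_prop

theorem actionA_nonneg (c : ℝ) (γ : ℝ → ℝ × ℝ) {t : ℝ} (ht : 0 ≤ t) : 0 ≤ actionA c γ 0 t :=
  intervalIntegral.integral_nonneg ht fun _ _ => La_nonneg c _ _

theorem mul_potential_le_actionA (c : ℝ) {γ : ℝ → ℝ × ℝ} {a b δ : ℝ}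
    (hγ : PiecewiseC1On γ a b) (hab : a ≤ b) (hδ : 0 ≤ δ)
    (h : ∀ s ∈ Icc a b, δ ≤ ‖((γ s).1 : AddCircle (1 : ℝ))‖) :
    (b - a) * potential δ ≤ actionA c γ a b := by
  calc (b - a) * potential δ = ∫ _ in a..b, potential δ := by simp
    _ ≤ actionA c γ a b := intervalIntegral.integral_mono_on hab intervalIntegrable_const
        (hγ.intervalIntegrable_comp hab (continuous_uncurry_La c))
        fun s hs => (potential_le_of_le_norm hδ (h s hs)).trans (potential_le_La c _ _)

theorem abs_jacobiPrimitive_sub_le_actionA (c : ℝ) {γ : ℝ → ℝ × ℝ} {a b u v : ℝ}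
    (hγ : PiecewiseC1On γ a b) (hau : a ≤ u) (huv : u ≤ v) (hvb : v ≤ b) :
    |jacobiPrimitive (γ v).1 - jacobiPrimitive (γ u).1| ≤ actionA c γ a b := by
  have hab := hau.trans (huv.trans hvb)
  have hsub : uIcc u v ⊆ uIcc a b := by
    rw [uIcc_of_le huv, uIcc_of_le hab]; exact Icc_subset_Icc hau hvb
  have hL := hγ.intervalIntegrable_comp hab (continuous_uncurry_La c)
  have hW := hγ.intervalIntegrable_comp hab (Φ := fun z w => jacobiWeight z.1 * w.1)
    ((continuous_jacobiWeight.comp (continuous_fst.comp continuous_fst)).mul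
      (continuous_fst.comp continuous_snd))
  have ftc := hγ.integral_fderiv_comp_eq_sub hau huv hvb (G := fun z => jacobiPrimitive z.1)
    (G' := fun z => jacobiWeight z.1 • ContinuousLinearMap.fst ℝ ℝ ℝ)
    (fun z => (hasDerivAt_jacobiPrimitive z.1).comp_hasFDerivAt z (hasFDerivAt_fst))
    ((continuous_jacobiWeight.comp continuous_fst).smul continuous_const)
  simp only [smul_apply, ContinuousLinearMap.coe_fst', smul_eq_mul] at ftc
  calc |jacobiPrimitive (γ v).1 - jacobiPrimitive (γ u).1|
      = |∫ s in u..v, jacobiWeight (γ s).1 * (deriv γ s).1| := by rw [ftc]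
    _ ≤ ∫ s in u..v, |jacobiWeight (γ s).1 * (deriv γ s).1| :=
        intervalIntegral.abs_integral_le_integral_abs huv
    _ ≤ ∫ s in u..v, La c (γ s) (deriv γ s) :=
        intervalIntegral.integral_mono_on huv (hW.mono_set hsub).abs (hL.mono_set hsub)
          fun s _ => by
            rw [abs_mul, abs_of_nonneg (jacobiWeight_nonneg _)]
            exact jacobiWeight_mul_abs_le_La c _ _
    _ ≤ actionA c γ a b := intervalIntegral.integral_mono_interval hau huv hvb
        (ae_of_all _ fun _ => La_nonneg c _ _) hL

def actionGap (z : AddCircle (1 : ℝ)) : ℝ :=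
  min (potential (‖z‖ / 2)) (‖z‖ / 2 * jacobiWeight (‖z‖ / 2))

theorem actionGap_pos {z : AddCircle (1 : ℝ)} (hz : z ≠ 0) : 0 < actionGap z := by
  have hz2 : ‖z‖ ≤ 1 / 2 := by
    simpa using AddCircle.norm_le_half_period (1 : ℝ) (x := z) one_ne_zero
  have hδ : 0 < ‖z‖ / 2 := half_pos (norm_pos_iff.2 hz)
  have hpot := potential_pos hδ (by linarith)
  exact lt_min hpot (mul_pos hδ (sqrt_pos.2 (by linarith)))

theorem actionGap_le_actionA (c : ℝ) {γ : ℝ → ℝ × ℝ} {t : ℝ} (ht : 1 ≤ t)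
    (hγ : PiecewiseC1On γ 0 t) : actionGap ((γ 0).1 : AddCircle (1 : ℝ)) ≤ actionA c γ 0 t := by
  set x := (γ 0).1
  set δ := ‖(x : AddCircle (1 : ℝ))‖ / 2
  by_cases hstay : ∀ s ∈ Icc 0 t, |(γ s).1 - x| ≤ δ
  · calc actionGap x ≤ potential δ := min_le_left _ _
      _ ≤ (t - 0) * potential δ := le_mul_of_one_le_left (potential_nonneg _) (by linarith)
      _ ≤ actionA c γ 0 t := mul_potential_le_actionA c hγ (by linarith) (by positivity)
          fun s hs => half_norm_le_norm_coe (hstay s hs)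
  · push Not at hstay
    obtain ⟨s, hs, hmove⟩ := hstay
    have hweight : ∀ r ∈ Icc (x - δ) (x + δ), jacobiWeight δ ≤ jacobiWeight r := fun r hr =>
      jacobiWeight_le_of_le_norm (by positivity) <| half_norm_le_norm_coe <|
        abs_sub_le_iff.2 ⟨sub_le_iff_le_add'.2 hr.2, sub_le_comm.1 hr.1⟩
    calc actionGap x ≤ δ * jacobiWeight δ := min_le_right _ _
      _ = jacobiWeight δ * δ := mul_comm _ _
      _ ≤ |jacobiPrimitive (γ s).1 - jacobiPrimitive x| :=
          mul_le_abs_sub_of_le_deriv hasDerivAt_jacobiPrimitive jacobiWeight_nonneg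
            (by positivity) hweight hmove.le
      _ ≤ actionA c γ 0 t := abs_jacobiPrimitive_sub_le_actionA c hγ le_rfl hs.1 hs.2

theorem integral_mul_cosh_add (A B t : ℝ) :
    ∫ s in (0 : ℝ)..t, (A * cosh (2 * (s - t / 2)) + B) = A * sinh t + B * t := by
  rw [intervalIntegral.integral_eq_sub_of_hasDerivAt
    (f := fun s => A * sinh (2 * (s - t / 2)) / 2 + B * s) (fun s _ => ?_)
    (by apply Continuous.intervalIntegrable; fun_prop)]
  · simp only [show 2 * (t - t / 2) = t by ring, show 2 * (0 - t / 2) = -t by ring, sinh_neg]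
    ring
  · convert ((((hasDerivAt_id' s).sub_const (t / 2)).const_mul 2).sinh.const_mul A).div_const 2
      |>.fun_add ((hasDerivAt_id' s).const_mul B) using 1
    ring

theorem sinh_le_two_mul_cosh_half_sq (t : ℝ) : sinh t ≤ 2 * cosh (t / 2) ^ 2 := by
  rw [show t = 2 * (t / 2) by ring, sinh_two_mul, show 2 * (t / 2) / 2 = t / 2 by ring]
  nlinarith [sinh_lt_cosh (t / 2), cosh_pos (t / 2)]

theorem round_div_sub_sq_mul_le (c : ℝ) {t : ℝ} (ht : 0 < t) :
    ((round (c * t) : ℝ) / t - c) ^ 2 / 2 * t ≤ 1 / (8 * t) := by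
  have he : (c * t - round (c * t)) ^ 2 ≤ 1 / 4 := by
    nlinarith [abs_sub_round (c * t), sq_abs (c * t - round (c * t)),
      abs_nonneg (c * t - round (c * t))]
  have hBt : ((round (c * t) : ℝ) / t - c) ^ 2 / 2 * t = (c * t - round (c * t)) ^ 2 / (2 * t) := by
    field_simp; ring
  rw [hBt, div_le_div_iff₀ (by positivity) (by positivity)]
  nlinarith

section Loop

variable (c x y t : ℝ)

/-- `x` relaxes towards the line `x = 0` and back along a `cosh` profile, which keeps the
`x`-part of the action bounded as `t → ∞`; `y` winds `round (c t)` times at nearly speed `c`. -/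
def loopCurve (s : ℝ) : ℝ × ℝ :=
  (x * (cosh (s - t / 2) / cosh (t / 2)), y + round (c * t) / t * s)

theorem hasDerivAt_loopCurve (s : ℝ) :
    HasDerivAt (loopCurve c x y t)
      (x * (sinh (s - t / 2) / cosh (t / 2)), round (c * t) / t) s := by
  have hx := (((hasDerivAt_id' s).sub_const (t / 2)).cosh.div_const (cosh (t / 2))).const_mul x
  have hy := ((hasDerivAt_id' s).const_mul ((round (c * t) : ℝ) / t)).const_add y
  unfold loopCurve
  simpa only [mul_one] using hx.prodMk hy

theorem contDiff_loopCurve : ContDiff ℝ 1 (loopCurve c x y t) := by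
  unfold loopCurve; fun_prop

theorem p2_loopCurve_zero : p2 (loopCurve c x y t 0) = p2 (x, y) := by
  simp [loopCurve, p2, (cosh_pos (t / 2)).ne']

theorem p2_loopCurve_self (ht : t ≠ 0) : p2 (loopCurve c x y t t) = p2 (x, y) := by
  simp [loopCurve, p2, (cosh_pos (t / 2)).ne', ht, show t - t / 2 = t / 2 by ring]

theorem La_loopCurve_le (s : ℝ) :
    La c (loopCurve c x y t s) (deriv (loopCurve c x y t) s) ≤
      (2 * π ^ 2 + 1 / 2) * x ^ 2 / cosh (t / 2) ^ 2 * cosh (2 * (s - t / 2)) +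
        (round (c * t) / t - c) ^ 2 / 2 := by
  have hpot := potential_le_sq (x * (cosh (s - t / 2) / cosh (t / 2)))
  have hC := (cosh_pos (t / 2)).ne'
  have key : (2 * π ^ 2 + 1 / 2) * x ^ 2 / cosh (t / 2) ^ 2 * cosh (2 * (s - t / 2)) -
      ((x * (sinh (s - t / 2) / cosh (t / 2))) ^ 2 / 2 +
        2 * π ^ 2 * (x * (cosh (s - t / 2) / cosh (t / 2))) ^ 2) =
      x ^ 2 * (2 * π ^ 2 * sinh (s - t / 2) ^ 2 + cosh (s - t / 2) ^ 2 / 2) / cosh (t / 2) ^ 2 := by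
    rw [cosh_two_mul]; field_simp; ring
  have hgap : 0 ≤ x ^ 2 * (2 * π ^ 2 * sinh (s - t / 2) ^ 2 + cosh (s - t / 2) ^ 2 / 2) /
      cosh (t / 2) ^ 2 := by positivity
  rw [(hasDerivAt_loopCurve c x y t s).deriv, La_eq]
  simp only [loopCurve]
  linarith

theorem actionA_loopCurve_le (ht : 0 < t) :
    actionA c (loopCurve c x y t) 0 t ≤ (4 * π ^ 2 + 1) * x ^ 2 + 1 / (8 * t) := by
  set A := (2 * π ^ 2 + 1 / 2) * x ^ 2 / cosh (t / 2) ^ 2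
  set B := ((round (c * t) : ℝ) / t - c) ^ 2 / 2
  have hcont : Continuous fun s => La c (loopCurve c x y t s) (deriv (loopCurve c x y t) s) :=
    (continuous_uncurry_La c).comp ((contDiff_loopCurve c x y t).continuous.prodMk
      ((contDiff_loopCurve c x y t).continuous_deriv le_rfl))
  have hA : A * sinh t ≤ (4 * π ^ 2 + 1) * x ^ 2 :=
    calc A * sinh t ≤ A * (2 * cosh (t / 2) ^ 2) := by gcongr; exact sinh_le_two_mul_cosh_half_sq t
      _ = (4 * π ^ 2 + 1) * x ^ 2 := by simp only [A]; field_simp; ring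
  calc actionA c (loopCurve c x y t) 0 t ≤ ∫ s in (0 : ℝ)..t, (A * cosh (2 * (s - t / 2)) + B) :=
        intervalIntegral.integral_mono_on ht.le (hcont.intervalIntegrable _ _)
          (by apply Continuous.intervalIntegrable; fun_prop) fun s _ => La_loopCurve_le c x y t s
    _ = A * sinh t + B * t := integral_mul_cosh_add A B t
    _ ≤ (4 * π ^ 2 + 1) * x ^ 2 + 1 / (8 * t) := add_le_add hA (round_div_sub_sq_mul_le c ht)

end Loop

theorem Fa_nonneg (c : ℝ) {t : ℝ} (ht : 0 ≤ t) (q q' : T2) : 0 ≤ Fa c t q q' :=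
  Real.sInf_nonneg fun _ ⟨γ, _, _, _, hA⟩ => hA ▸ actionA_nonneg c γ ht

theorem Fa_le_actionA (c : ℝ) {t : ℝ} (ht : 0 ≤ t) {q q' : T2} {γ : ℝ → ℝ × ℝ}
    (hγ : PiecewiseC1On γ 0 t) (h0 : p2 (γ 0) = q) (h1 : p2 (γ t) = q') :
    Fa c t q q' ≤ actionA c γ 0 t :=
  csInf_le ⟨0, fun _ ⟨γ, _, _, _, hA⟩ => hA ▸ actionA_nonneg c γ ht⟩ ⟨γ, hγ, h0, h1, rfl⟩

theorem Fa_self_le (c x y : ℝ) {t : ℝ} (ht : 0 < t) :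
    Fa c t (p2 (x, y)) (p2 (x, y)) ≤ (4 * π ^ 2 + 1) * x ^ 2 + 1 / (8 * t) :=
  (Fa_le_actionA c ht.le ((contDiff_loopCurve c x y t).piecewiseC1On ht.le)
    (p2_loopCurve_zero c x y t) (p2_loopCurve_self c x y t ht.ne')).trans
    (actionA_loopCurve_le c x y t ht)

theorem actionGap_le_Fa_self (c x y : ℝ) {t : ℝ} (ht : 1 ≤ t) :
    actionGap x ≤ Fa c t (p2 (x, y)) (p2 (x, y)) := by
  refine le_csInf ⟨_, loopCurve c x y t, (contDiff_loopCurve c x y t).piecewiseC1On (by linarith),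
    p2_loopCurve_zero c x y t, p2_loopCurve_self c x y t (by linarith), rfl⟩ ?_
  rintro _ ⟨γ, hγ, h0, -, rfl⟩
  have hx : ((γ 0).1 : AddCircle (1 : ℝ)) = x := congrArg Prod.fst h0
  exact hx ▸ actionGap_le_actionA c ht hγ

theorem tendsto_Fa_self_bound (x : ℝ) :
    Tendsto (fun t => (4 * π ^ 2 + 1) * x ^ 2 + 1 / (8 * t)) atTop
      (𝓝 ((4 * π ^ 2 + 1) * x ^ 2)) := by
  have h := (tendsto_const_nhds (x := (1 : ℝ))).div_atTop
    (tendsto_id.const_mul_atTop (by norm_num : (0 : ℝ) < 8))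
  simpa using (tendsto_const_nhds (x := (4 * π ^ 2 + 1) * x ^ 2)).add h

theorem isBoundedUnder_Fa_self (c x y : ℝ) :
    IsBoundedUnder (· ≤ ·) atTop fun t => Fa c t (p2 (x, y)) (p2 (x, y)) :=
  (tendsto_Fa_self_bound x).isBoundedUnder_le.mono_le
    (eventually_gt_atTop 0 |>.mono fun _ ht => Fa_self_le c x y ht)

theorem tendsto_Fa_self_zero (c y : ℝ) :
    Tendsto (fun t => Fa c t (p2 (0, y)) (p2 (0, y))) atTop (𝓝 0) := by
  refine tendsto_of_tendsto_of_tendsto_of_le_of_le' tendsto_const_nhds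
    (by simpa using tendsto_Fa_self_bound 0) (eventually_ge_atTop 0 |>.mono fun t ht => ?_)
    (eventually_gt_atTop 0 |>.mono fun t ht => Fa_self_le c 0 y ht)
  exact Fa_nonneg c ht _ _

theorem hA_eq_liminfTop (c : ℝ) (q q' : T2) : hA c q q' = liminfTop fun t => Fa c t q q' := rfl

theorem p2_surjective : Function.Surjective p2 := fun q => by
  obtain ⟨x, hx⟩ := QuotientAddGroup.mk_surjective q.1
  obtain ⟨y, hy⟩ := QuotientAddGroup.mk_surjective q.2
  exact ⟨(x, y), Prod.ext hx hy⟩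

theorem p2_mem_circ0_iff (x y : ℝ) : p2 (x, y) ∈ circ0 ↔ (x : AddCircle (1 : ℝ)) = 0 :=
  ⟨fun ⟨_, h⟩ => by simpa [p2] using congrArg Prod.fst h, fun h => ⟨y, by simp [p2, h]⟩⟩

/-- For `L_a(x,y,ẋ,ẏ) = ẋ²/2 + 1 − cos(2πx) + (ẏ−c)²/2` on `𝕋²`,
the projected Aubry set equals `{0} × 𝕊¹`: `h(q,q) = 0` iff `q = π(0,ỹ)` for
some `ỹ ∈ ℝ`. -/
theorem aubry_set_eq_circle (c : ℝ) (q : T2) :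
    hA c q q = 0 ↔ q ∈ circ0 := by
  obtain ⟨⟨x, y⟩, rfl⟩ := p2_surjective q
  rw [hA_eq_liminfTop, p2_mem_circ0_iff]
  constructor
  · intro h
    by_contra hx
    have hgap := le_liminfTop (fun t ht => Fa_nonneg c ht.le _ _) (isBoundedUnder_Fa_self c x y)
      (eventually_ge_atTop 1 |>.mono fun t ht => actionGap_le_Fa_self c x y ht)
    exact (actionGap_pos hx).not_ge (h ▸ hgap)
  · intro hx
    rw [show p2 (x, y) = p2 (0, y) by simp [p2, hx]]
    exact liminfTop_eq_zero (fun t ht => Fa_nonneg c ht.le _ _) (tendsto_Fa_self_zero c y)
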